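/- arXiv:2311.02967 — 6 statements merged into one kernel-verified Lean document; each statement's English description precedes it below -/
import Mathlib

section
/- Let A and B be closed linear subspaces of a Hilbert space H and let x ∈ H. Define b₀ = x, aₙ = P_A(b_{n-1}), bₙ = P_B(aₙ), where P_A, P_B denote orthogonal projections. Then both sequences (aₙ) and (bₙ) converge in norm to P_{A∩B}(x). -/
open RealInnerProductSpace Filter Topology

noncomputable def proj {E : Type*} [NormedAddCommGroup E] [InnerProductSpace ℝ E]
    (K : Submodule ℝ E) [CompleteSpace K] : E →L[ℝ] E :=
  K.subtypeL.comp (K.orthogonalProjectionOnto)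

/-!
Interleave the two sequences as `c = (x, a₁, b₁, a₂, b₂, …)`, each term the projection of the
previous one onto `A` or `B`. Projections shrink norms, so `‖cₙ‖²` decreases to a limit. Because
`cₙ` already lies in the subspace the projection before it mapped onto, moving a projection across
an inner product shows `‖cₘ‖² ≤ ⟪cₙ, cₘ⟫` for `1 ≤ n ≤ m`, hence
`‖cₙ - cₘ‖² ≤ ‖cₙ‖² - ‖cₘ‖²` and `c` is Cauchy. Its limit lies in `A` and in `B`, and `⟪cₙ, z⟫`
is constant for `z ∈ A ⊓ B`, which characterizes the limit as `P_{A ⊓ B} x`.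
-/

section Projection

variable {E : Type*} [NormedAddCommGroup E] [InnerProductSpace ℝ E]

lemma proj_congr {K L : Submodule ℝ E} [CompleteSpace K] [CompleteSpace L] (h : K = L) :
    proj K = proj L := by
  subst h; rfl

variable (K : Submodule ℝ E) [CompleteSpace K]

lemma proj_apply_mem (u : E) : proj K u ∈ K := K.starProjection_apply_mem u

lemma proj_apply_of_mem {u : E} (hu : u ∈ K) : proj K u = u :=
  K.starProjection_eq_self_iff.mpr hu

lemma inner_proj_left (u v : E) : ⟪proj K u, v⟫ = ⟪u, proj K v⟫ :=
  K.inner_starProjection_left_eq_right u v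

lemma norm_proj_apply_le (u : E) : ‖proj K u‖ ≤ ‖u‖ := K.norm_starProjection_apply_le u

lemma inner_proj_right_self (u : E) : ⟪u, proj K u⟫ = ‖proj K u‖ ^ 2 := by
  rw [← real_inner_self_eq_norm_sq, inner_proj_left, proj_apply_of_mem K (proj_apply_mem K u)]

end Projection

lemma cauchySeq_of_dist_sq_le {α : Type*} [PseudoMetricSpace α] {u : ℕ → α} {f : ℕ → ℝ}
    (hf : CauchySeq f) (h : ∀ n m, n ≤ m → dist (u n) (u m) ^ 2 ≤ f n - f m) :
    CauchySeq u := by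
  rw [Metric.cauchySeq_iff'] at hf ⊢
  intro ε hε
  obtain ⟨N, hN⟩ := hf (ε ^ 2) (by positivity)
  refine ⟨N, fun n hn => ?_⟩
  have hsq : dist (u n) (u N) ^ 2 < ε ^ 2 := by
    rw [dist_comm]
    calc dist (u N) (u n) ^ 2 ≤ f N - f n := h N n hn
      _ ≤ dist (f n) (f N) := by rw [Real.dist_eq]; linarith [neg_abs_le (f n - f N)]
      _ < ε ^ 2 := hN n hn
  exact lt_of_pow_lt_pow_left₀ 2 hε.le hsq

section ProjectionSequence

variable {E : Type*} [NormedAddCommGroup E] [InnerProductSpace ℝ E]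
  {K : ℕ → Submodule ℝ E} [∀ n, CompleteSpace (K n)] {c : ℕ → E}

def IsProjectionSequence (K : ℕ → Submodule ℝ E) [∀ n, CompleteSpace (K n)] (c : ℕ → E) :
    Prop :=
  ∀ n, c (n + 1) = proj (K n) (c n)

namespace IsProjectionSequence

variable (hc : IsProjectionSequence K c)
include hc

lemma mem (n : ℕ) : c (n + 1) ∈ K n := hc n ▸ proj_apply_mem _ _

lemma antitone_norm_sq : Antitone fun n => ‖c n‖ ^ 2 :=
  antitone_nat_of_succ_le fun n => by
    rw [hc n]
    exact pow_le_pow_left₀ (norm_nonneg _) (norm_proj_apply_le _ _) 2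

lemma inner_succ (n : ℕ) : ⟪c n, c (n + 1)⟫ = ‖c (n + 1)‖ ^ 2 := by
  rw [hc n, inner_proj_right_self]

lemma inner_eq_inner_zero {z : E} (hz : ∀ n, z ∈ K n) (n : ℕ) : ⟪c n, z⟫ = ⟪c 0, z⟫ := by
  induction n with
  | zero => rfl
  | succ n ih => rw [hc n, inner_proj_left, proj_apply_of_mem _ (hz n), ih]

section TwoSubspaces

variable (hK : ∀ m n, K m = K n ∨ K m = K (n + 1))
include hK

lemma proj_apply_succ_eq_or (m n : ℕ) :
    proj (K m) (c (n + 1)) = c (n + 1) ∨ proj (K m) (c (n + 1)) = c (n + 2) := by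
  rcases hK m n with h | h
  · exact .inl (proj_apply_of_mem _ (h ▸ hc.mem n))
  · exact .inr (by rw [proj_congr h, hc (n + 1)])

lemma norm_sq_le_inner {n m : ℕ} (hnm : n ≤ m) :
    ‖c (m + 1)‖ ^ 2 ≤ ⟪c (n + 1), c (m + 1)⟫ := by
  induction m generalizing n with
  | zero => rw [Nat.le_zero.mp hnm, real_inner_self_eq_norm_sq]
  | succ m ih =>
    obtain hlt | rfl | rfl : n < m ∨ n = m ∨ n = m + 1 := by omega
    · calc ‖c (m + 2)‖ ^ 2 ≤ ‖c (m + 1)‖ ^ 2 := hc.antitone_norm_sq (by omega)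
        _ ≤ ⟪proj (K (m + 1)) (c (n + 1)), c (m + 1)⟫ := by
          rcases hc.proj_apply_succ_eq_or hK (m + 1) n with h | h <;> rw [h]
          exacts [ih hlt.le, ih hlt]
        _ = ⟪c (n + 1), c (m + 2)⟫ := by rw [inner_proj_left, hc (m + 1)]
    · exact (hc.inner_succ (n + 1)).ge
    · rw [real_inner_self_eq_norm_sq]

lemma norm_sub_sq_le {n m : ℕ} (hnm : n ≤ m) :
    ‖c (n + 1) - c (m + 1)‖ ^ 2 ≤ ‖c (n + 1)‖ ^ 2 - ‖c (m + 1)‖ ^ 2 := by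
  rw [norm_sub_sq_real]
  linarith [hc.norm_sq_le_inner hK hnm]

lemma cauchySeq : CauchySeq c := by
  rw [← cauchySeq_shift 1]
  have hanti : Antitone fun n => ‖c (n + 1)‖ ^ 2 :=
    hc.antitone_norm_sq.comp_monotone fun _ _ h => Nat.succ_le_succ h
  have hbdd : BddBelow (Set.range fun n => ‖c (n + 1)‖ ^ 2) :=
    ⟨0, by rintro _ ⟨n, rfl⟩; positivity⟩
  refine cauchySeq_of_dist_sq_le (tendsto_atTop_ciInf hanti hbdd).cauchySeq fun n m hnm => ?_
  rw [dist_eq_norm]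
  exact hc.norm_sub_sq_le hK hnm

end TwoSubspaces

lemma mem_of_tendsto (L : Submodule ℝ E) [CompleteSpace L] (hL : ∃ᶠ n in atTop, K n = L) {y : E}
    (hy : Tendsto c atTop (𝓝 y)) : y ∈ L :=
  (completeSpace_coe_iff_isComplete.mp ‹_›).isClosed.mem_of_frequently_of_tendsto
    (hL.mono fun n h => h ▸ hc.mem n) ((tendsto_add_atTop_iff_nat 1).mpr hy)

lemma proj_apply_eq_of_tendsto (L : Submodule ℝ E) [CompleteSpace L] (hLK : ∀ n, L ≤ K n)
    {y : E} (hyL : y ∈ L) (hy : Tendsto c atTop (𝓝 y)) : proj L (c 0) = y := by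
  refine L.eq_starProjection_of_mem_of_inner_eq_zero hyL fun w hw => ?_
  have hconst : ⟪y, w⟫ = ⟪c 0, w⟫ :=
    tendsto_nhds_unique (hy.inner tendsto_const_nhds)
      (by simp only [hc.inner_eq_inner_zero fun n => hLK n hw, tendsto_const_nhds])
  rw [inner_sub_left, hconst, sub_self]

end IsProjectionSequence

end ProjectionSequence

section Alternating

variable {E : Type*} [NormedAddCommGroup E] [InnerProductSpace ℝ E] (A B : Submodule ℝ E)

def alternating (n : ℕ) : Submodule ℝ E := if Even n then A else B

instance [CompleteSpace A] [CompleteSpace B] (n : ℕ) : CompleteSpace (alternating A B n) := by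
  by_cases h : Even n
  · rw [alternating, if_pos h]; infer_instance
  · rw [alternating, if_neg h]; infer_instance

lemma alternating_two_mul (k : ℕ) : alternating A B (2 * k) = A := by
  simp [alternating]

lemma alternating_two_mul_add_one (k : ℕ) : alternating A B (2 * k + 1) = B := by
  simp [alternating]

lemma alternating_eq_or (m n : ℕ) :
    alternating A B m = alternating A B n ∨ alternating A B m = alternating A B (n + 1) := by
  by_cases hm : Even m <;> by_cases hn : Even n <;> simp [alternating, Nat.even_add_one, hm, hn]

lemma frequently_alternating_eq_left : ∃ᶠ n in atTop, alternating A B n = A :=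
  frequently_atTop.mpr fun n => ⟨2 * n, by omega, alternating_two_mul A B n⟩

lemma frequently_alternating_eq_right : ∃ᶠ n in atTop, alternating A B n = B :=
  frequently_atTop.mpr fun n => ⟨2 * n + 1, by omega, alternating_two_mul_add_one A B n⟩

lemma inf_le_alternating (n : ℕ) : A ⊓ B ≤ alternating A B n := by
  unfold alternating; split_ifs
  exacts [inf_le_left, inf_le_right]

end Alternating

section Interleave

variable {E : Type*} (b a : ℕ → E)

def interleave (n : ℕ) : E := if Even n then b (n / 2) else a (n / 2 + 1)

lemma interleave_two_mul (k : ℕ) : interleave b a (2 * k) = b k := by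
  simp [interleave]

lemma interleave_two_mul_add_one (k : ℕ) : interleave b a (2 * k + 1) = a (k + 1) := by
  have hdiv : (2 * k + 1) / 2 = k := by omega
  simp [interleave, hdiv]

end Interleave

lemma isProjectionSequence_interleave {E : Type*} [NormedAddCommGroup E] [InnerProductSpace ℝ E]
    {A B : Submodule ℝ E} [CompleteSpace A] [CompleteSpace B] {a b : ℕ → E}
    (ha : ∀ n : ℕ, a (n + 1) = proj A (b n)) (hb : ∀ n : ℕ, b (n + 1) = proj B (a (n + 1))) :
    IsProjectionSequence (alternating A B) (interleave b a) := by
  intro n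
  obtain ⟨k, rfl | rfl⟩ := Nat.even_or_odd' n
  · rw [interleave_two_mul_add_one, interleave_two_mul, proj_congr (alternating_two_mul A B k),
      ha]
  · rw [show 2 * k + 1 + 1 = 2 * (k + 1) by ring, interleave_two_mul, interleave_two_mul_add_one,
      proj_congr (alternating_two_mul_add_one A B k), hb]

theorem stmt0 {E : Type*} [NormedAddCommGroup E] [InnerProductSpace ℝ E] [CompleteSpace E]
    (A B : Submodule ℝ E) [CompleteSpace A] [CompleteSpace B] [CompleteSpace ↥(A ⊓ B)]
    (x : E) (a b : ℕ → E) (hb0 : b 0 = x)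
    (ha : ∀ n : ℕ, a (n + 1) = proj A (b n))
    (hb : ∀ n : ℕ, b (n + 1) = proj B (a (n + 1))) :
    Filter.Tendsto (fun n => a (n + 1)) Filter.atTop (nhds (proj (A ⊓ B) x)) ∧
      Filter.Tendsto b Filter.atTop (nhds (proj (A ⊓ B) x)) := by
  have hc := isProjectionSequence_interleave ha hb
  obtain ⟨y, hy⟩ := cauchySeq_tendsto_of_complete (hc.cauchySeq (alternating_eq_or A B))
  have hyAB : y ∈ A ⊓ B :=
    ⟨hc.mem_of_tendsto A (frequently_alternating_eq_left A B) hy,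
      hc.mem_of_tendsto B (frequently_alternating_eq_right A B) hy⟩
  have hxy : proj (A ⊓ B) x = y := by
    rw [← hb0, ← interleave_two_mul b a 0]
    exact hc.proj_apply_eq_of_tendsto _ (inf_le_alternating A B) hyAB hy
  rw [hxy]
  constructor
  · simpa only [Function.comp_def, interleave_two_mul_add_one] using
      hy.comp (StrictMono.tendsto_atTop fun _ _ h => by omega : Tendsto (2 * · + 1) atTop atTop)
  · simpa only [Function.comp_def, interleave_two_mul] using
      hy.comp (StrictMono.tendsto_atTop fun _ _ h => by omega : Tendsto (2 * ·) atTop atTop)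
end

section
/- Let A, B be closed subspaces of a Hilbert space H. Define c₀(A,B) = sup{ |⟨a,b⟩| : a ∈ A, ‖a‖ ≤ 1, b ∈ B, ‖b‖ ≤ 1 }, and let c(A,B) = c₀(A ∩ (A∩B)^⊥, B ∩ (A∩B)^⊥). Then ‖P_A P_B − P_{A∩B}‖ = c(A,B). -/
noncomputable def cos0 {E : Type*} [NormedAddCommGroup E] [InnerProductSpace ℝ E]
    (A B : Submodule ℝ E) : ℝ :=
  sSup {r : ℝ | ∃ g ∈ A, ∃ h ∈ B, ‖g‖ ≤ 1 ∧ ‖h‖ ≤ 1 ∧ r = |(inner ℝ g h : ℝ)|}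

section aux

variable {E : Type*} [NormedAddCommGroup E] [InnerProductSpace ℝ E] [CompleteSpace E]

local notation "orthogonalProjection" => Submodule.orthogonalProjectionOnto

omit [CompleteSpace E] in
lemma eq_orthogonalProjection_of_mem_orthogonal {K : Submodule ℝ E} [CompleteSpace K] {u v : E}
    (hv : v ∈ K) (hvo : u - v ∈ Kᗮ) : (orthogonalProjection K u : E) = v :=
  Submodule.eq_starProjection_of_mem_orthogonal hv hvo

omit [CompleteSpace E] in
lemma sub_orthogonalProjection_mem_orthogonal {K : Submodule ℝ E} [CompleteSpace K] (v : E) :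
    v - (orthogonalProjection K v : E) ∈ Kᗮ :=
  Submodule.sub_starProjection_mem_orthogonal v

omit [CompleteSpace E] in
lemma orthogonalProjection_orthogonalProjection_of_le {U V : Submodule ℝ E} [CompleteSpace U]
    [CompleteSpace V] (h : U ≤ V) (x : E) :
    orthogonalProjection U (orthogonalProjection V x : E) = orthogonalProjection U x :=
  Submodule.orthogonalProjectionOnto_starProjection_of_le h x

omit [CompleteSpace E] in
lemma orthogonalProjection_inner_eq_zero {K : Submodule ℝ E} [CompleteSpace K] (v w : E)
    (hw : w ∈ K) : inner ℝ (v - (orthogonalProjection K v : E)) w = 0 :=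
  Submodule.starProjection_inner_eq_zero v w hw

omit [CompleteSpace E] in
lemma orthogonalProjection_eq_self_iff {K : Submodule ℝ E} [CompleteSpace K] {v : E} :
    (orthogonalProjection K v : E) = v ↔ v ∈ K :=
  Submodule.starProjection_eq_self_iff

omit [CompleteSpace E] in
lemma inner_orthogonalProjection_left_eq_right (K : Submodule ℝ E) [CompleteSpace K] (u v : E) :
    inner ℝ (orthogonalProjection K u : E) v = inner ℝ u (orthogonalProjection K v : E) :=
  Submodule.inner_starProjection_left_eq_right K u v

omit [CompleteSpace E] in
lemma orthogonalProjection_norm_le (K : Submodule ℝ E) [CompleteSpace K] :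
    ‖orthogonalProjection K‖ ≤ 1 :=
  Submodule.orthogonalProjectionOnto_norm_le K

/-- Decomposition inside `K`: for `y ∈ K`, the projection onto `K ⊓ Mᗮ` is `y - P_M y`. -/
lemma proj_inf_orthogonal_eq {K M : Submodule ℝ E} [CompleteSpace K] [CompleteSpace M]
    [CompleteSpace ↥(K ⊓ Mᗮ)] (hMK : M ≤ K) {y : E} (hy : y ∈ K) :
    (orthogonalProjection (K ⊓ Mᗮ) y : E) = y - orthogonalProjection M y := by
  apply eq_orthogonalProjection_of_mem_orthogonal
  · exact ⟨K.sub_mem hy (hMK (orthogonalProjection M y).2),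
      sub_orthogonalProjection_mem_orthogonal y⟩
  · have : (orthogonalProjection M y : E) ∈ (K ⊓ Mᗮ)ᗮ :=
      Submodule.orthogonal_le inf_le_right
        (M.le_orthogonal_orthogonal (orthogonalProjection M y).2)
    simpa using this

lemma key_eq (A B : Submodule ℝ E) [CompleteSpace A] [CompleteSpace B]
    [CompleteSpace ↥(A ⊓ B)] [CompleteSpace ↥(A ⊓ (A ⊓ B)ᗮ)]
    [CompleteSpace ↥(B ⊓ (A ⊓ B)ᗮ)] (x : E) :
    (proj A ∘L proj B - proj (A ⊓ B)) x =
      (orthogonalProjection (A ⊓ (A ⊓ B)ᗮ)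
        (orthogonalProjection (B ⊓ (A ⊓ B)ᗮ) x : E) : E) := by
  set M := A ⊓ B with hM
  set y : E := (orthogonalProjection B x : E) with hy
  have hyB : y ∈ B := (orthogonalProjection B x).2
  -- P_{B'} x = y - P_M y
  have h1 : (orthogonalProjection (B ⊓ Mᗮ) x : E) = y - orthogonalProjection M y := by
    calc (orthogonalProjection (B ⊓ Mᗮ) x : E)
        = (orthogonalProjection (B ⊓ Mᗮ) y : E) :=
          congrArg Subtype.val (orthogonalProjection_orthogonalProjection_of_le
            (inf_le_left : B ⊓ Mᗮ ≤ B) x).symm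
      _ = y - orthogonalProjection M y :=
          proj_inf_orthogonal_eq (K := B) (M := M) inf_le_right hyB
  -- P_M (anything in M) vanishes under P_{A ⊓ Mᗮ}
  have h2 : (orthogonalProjection (A ⊓ Mᗮ) ((orthogonalProjection M y : E)) : E) = 0 := by
    have hm : (orthogonalProjection M y : E) ∈ (A ⊓ Mᗮ)ᗮ :=
      Submodule.orthogonal_le inf_le_right
        (M.le_orthogonal_orthogonal (orthogonalProjection M y).2)
    simpa using congrArg (Submodule.subtype _)
      (Submodule.orthogonalProjectionOnto_apply_of_mem_orthogonal hm)
  -- P_{A'} y = P_A y - P_M y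
  have h3 : (orthogonalProjection (A ⊓ Mᗮ) y : E)
      = (orthogonalProjection A y : E) - orthogonalProjection M y := by
    have hz : (orthogonalProjection A y : E) ∈ A := (orthogonalProjection A y).2
    have := proj_inf_orthogonal_eq (K := A) (M := M) inf_le_left hz
    rw [orthogonalProjection_orthogonalProjection_of_le (inf_le_left : A ⊓ Mᗮ ≤ A)] at this
    rw [this, orthogonalProjection_orthogonalProjection_of_le (inf_le_left : M ≤ A)]
  have h4 : (orthogonalProjection M x : E) = orthogonalProjection M y :=
    (congrArg _ (orthogonalProjection_orthogonalProjection_of_le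
      (inf_le_right : M ≤ B) x)).symm
  simp only [ContinuousLinearMap.sub_apply, ContinuousLinearMap.comp_apply, proj,
    ContinuousLinearMap.coe_comp', Function.comp_apply, Submodule.coe_subtypeL',
    Submodule.coe_subtype]
  rw [h1, map_sub]
  push_cast
  rw [h2, h3, h4, sub_zero]


omit [CompleteSpace E] in
/-- algebraic core for the upper bound -/
lemma core_le {A' B' : Submodule ℝ E} {c : ℝ} (hc : 0 ≤ c)
    (hC : ∀ g ∈ A', ∀ h ∈ B', ‖g‖ ≤ 1 → ‖h‖ ≤ 1 → |(inner ℝ g h : ℝ)| ≤ c)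
    {y z : E} (hy : y ∈ B') (hzA : z ∈ A') (hzy : (inner ℝ z y : ℝ) = ‖z‖ ^ 2) :
    ‖z‖ ≤ c * ‖y‖ := by
  by_cases hz0 : z = 0
  · simpa [hz0] using mul_nonneg hc (norm_nonneg y)
  have hzpos : (0:ℝ) < ‖z‖ := norm_pos_iff.mpr hz0
  by_cases hy0 : y = 0
  · exfalso
    apply hz0
    have h2 : ‖z‖ ^ 2 = 0 := by rw [← hzy, hy0, inner_zero_right]
    have := pow_eq_zero_iff (n := 2) (by norm_num) |>.mp h2
    exact norm_eq_zero.mp this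
  have hypos : (0:ℝ) < ‖y‖ := norm_pos_iff.mpr hy0
  have h := hC (‖z‖⁻¹ • z) (A'.smul_mem _ hzA) (‖y‖⁻¹ • y) (B'.smul_mem _ hy)
    (by rw [norm_smul, norm_inv, norm_norm, inv_mul_cancel₀ hzpos.ne'])
    (by rw [norm_smul, norm_inv, norm_norm, inv_mul_cancel₀ hypos.ne'])
  rw [real_inner_smul_left, real_inner_smul_right, hzy, abs_mul, abs_mul,
    abs_of_nonneg (inv_nonneg.mpr hzpos.le), abs_of_nonneg (inv_nonneg.mpr hypos.le),
    abs_of_nonneg (by positivity : (0:ℝ) ≤ ‖z‖ ^ 2)] at h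
  have he : ‖z‖⁻¹ * (‖y‖⁻¹ * ‖z‖ ^ 2) = ‖z‖ / ‖y‖ := by
    field_simp
  rw [he, div_le_iff₀ hypos] at h
  linarith

/-- upper bound: the composed projection is bounded by `c`. -/
lemma aux_le (A' B' : Submodule ℝ E) [CompleteSpace A'] [CompleteSpace B']
    {c : ℝ} (hc : 0 ≤ c)
    (hC : ∀ g ∈ A', ∀ h ∈ B', ‖g‖ ≤ 1 → ‖h‖ ≤ 1 → |(inner ℝ g h : ℝ)| ≤ c) (x : E) :
    ‖(orthogonalProjection A' (orthogonalProjection B' x : E) : E)‖ ≤ c * ‖x‖ := by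
  have hself : ∀ (K : Submodule ℝ E) [CompleteSpace K], ∀ w : E,
      (inner ℝ ((orthogonalProjection K w : E)) w : ℝ)
        = ‖(orthogonalProjection K w : E)‖ ^ 2 := by
    intro K _ w
    have h0 := orthogonalProjection_inner_eq_zero w
      ((orthogonalProjection K w : E)) (orthogonalProjection K w).2
    rw [inner_sub_left] at h0
    have h1 : (inner ℝ w ((orthogonalProjection K w : E)) : ℝ)
        = inner ℝ ((orthogonalProjection K w : E)) ((orthogonalProjection K w : E)) := by
      linarith
    rw [real_inner_comm, h1, real_inner_self_eq_norm_sq]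
  have step1 : ‖(orthogonalProjection A' (orthogonalProjection B' x : E) : E)‖
      ≤ c * ‖(orthogonalProjection B' x : E)‖ :=
    core_le hc hC (orthogonalProjection B' x).2
      (orthogonalProjection A' _).2 (hself A' _)
  have step2 : ‖(orthogonalProjection B' x : E)‖ ≤ ‖x‖ := by
    calc ‖(orthogonalProjection B' x : E)‖
        = ‖orthogonalProjection B' x‖ := rfl
      _ ≤ ‖orthogonalProjection B'‖ * ‖x‖ := (orthogonalProjection B').le_opNorm x
      _ ≤ 1 * ‖x‖ := mul_le_mul_of_nonneg_right (orthogonalProjection_norm_le _) (norm_nonneg x)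
      _ = ‖x‖ := one_mul _
  exact step1.trans (mul_le_mul_of_nonneg_left step2 hc)

/-- lower bound: each inner product value is bounded by `‖T‖`. -/
lemma aux_ge (A' B' : Submodule ℝ E) [CompleteSpace A'] [CompleteSpace B']
    (T : E →L[ℝ] E)
    (hkey : ∀ x : E, T x = (orthogonalProjection A' (orthogonalProjection B' x : E) : E))
    {g h : E} (hg : g ∈ A') (hh : h ∈ B') (hg1 : ‖g‖ ≤ 1) (hh1 : ‖h‖ ≤ 1) :
    |(inner ℝ g h : ℝ)| ≤ ‖T‖ := by
  have hThval : T h = (orthogonalProjection A' h : E) := by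
    rw [hkey h, orthogonalProjection_eq_self_iff.mpr hh]
  have hginner : (inner ℝ g (T h) : ℝ) = inner ℝ g h := by
    rw [hThval, ← inner_orthogonalProjection_left_eq_right,
      orthogonalProjection_eq_self_iff.mpr hg]
  calc |(inner ℝ g h : ℝ)| = |(inner ℝ g (T h) : ℝ)| := by rw [hginner]
    _ ≤ ‖g‖ * ‖T h‖ := abs_real_inner_le_norm _ _
    _ ≤ 1 * (‖T‖ * ‖h‖) := mul_le_mul hg1 (T.le_opNorm h) (norm_nonneg _) zero_le_one
    _ ≤ 1 * (‖T‖ * 1) := by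
        have := mul_le_mul_of_nonneg_left hh1 (norm_nonneg T)
        linarith
    _ = ‖T‖ := by ring

end aux

theorem stmt2 {E : Type*} [NormedAddCommGroup E] [InnerProductSpace ℝ E] [CompleteSpace E]
    (A B : Submodule ℝ E) [CompleteSpace A] [CompleteSpace B] [CompleteSpace ↥(A ⊓ B)] :
    ‖proj A ∘L proj B - proj (A ⊓ B)‖ = cos0 (A ⊓ (A ⊓ B)ᗮ) (B ⊓ (A ⊓ B)ᗮ) := by
  have hAcl : IsClosed (A : Set E) := (completeSpace_coe_iff_isComplete.mp ‹_›).isClosed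
  have hBcl : IsClosed (B : Set E) := (completeSpace_coe_iff_isComplete.mp ‹_›).isClosed
  haveI hA' : CompleteSpace ↥(A ⊓ (A ⊓ B)ᗮ) := by
    have : IsClosed ((A ⊓ (A ⊓ B)ᗮ : Submodule ℝ E) : Set E) := by
      rw [Submodule.coe_inf]; exact hAcl.inter (A ⊓ B).isClosed_orthogonal
    exact this.completeSpace_coe
  haveI hB' : CompleteSpace ↥(B ⊓ (A ⊓ B)ᗮ) := by
    have : IsClosed ((B ⊓ (A ⊓ B)ᗮ : Submodule ℝ E) : Set E) := by
      rw [Submodule.coe_inf]; exact hBcl.inter (A ⊓ B).isClosed_orthogonal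
    exact this.completeSpace_coe
  have hkey := key_eq A B
  rw [cos0]
  set s : Set ℝ := {r : ℝ | ∃ g ∈ A ⊓ (A ⊓ B)ᗮ, ∃ h ∈ B ⊓ (A ⊓ B)ᗮ,
      ‖g‖ ≤ 1 ∧ ‖h‖ ≤ 1 ∧ r = |(inner ℝ g h : ℝ)|} with hs
  have hbdd : BddAbove s := by
    refine ⟨1, ?_⟩
    rintro r ⟨g, hg, h, hh, hg1, hh1, rfl⟩
    calc |(inner ℝ g h : ℝ)| ≤ ‖g‖ * ‖h‖ := abs_real_inner_le_norm g h
      _ ≤ 1 * 1 := mul_le_mul hg1 hh1 (norm_nonneg h) zero_le_one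
      _ = 1 := one_mul 1
  have h0mem : (0 : ℝ) ∈ s :=
    ⟨0, zero_mem _, 0, zero_mem _, by simp, by simp, by simp⟩
  have hc0 : 0 ≤ sSup s := le_csSup hbdd h0mem
  apply le_antisymm
  · refine ContinuousLinearMap.opNorm_le_bound _ hc0 fun x => ?_
    rw [hkey x]
    exact aux_le _ _ hc0
      (fun g hg h hh hg1 hh1 => le_csSup hbdd ⟨g, hg, h, hh, hg1, hh1, rfl⟩) x
  · refine csSup_le ⟨0, h0mem⟩ ?_
    rintro r ⟨g, hg, h, hh, hg1, hh1, rfl⟩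
    exact aux_ge _ _ _ hkey hg hh hg1 hh1
end

section
/- Let A, B be closed subspaces of a Hilbert space H with orthogonal projections P_A, P_B. For every n ≥ 1, ‖(P_A P_B)ⁿ − P_{A∩B}‖ = ‖P_A P_B − P_{A∩B}‖^{2n−1}. In particular, writing c = c(A,B) = ‖P_A P_B − P_{A∩B}‖, for every x ∈ H, ‖(P_A P_B)ⁿ x − P_{A∩B} x‖ ≤ c^{2n−1} ‖x‖. -/
/-!
Let `M = A ⊓ B`. Since `P_M` is absorbed by `P_A` and `P_B` on both sides, `P_A P_B - P_M = Q_A Q_B`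
and `(P_A P_B)ⁿ - P_M = (Q_A Q_B)ⁿ` for the projections `Q_A = P_A - P_M`, `Q_B = P_B - P_M`.
For projections `p, q` put `t = p q p`, which is self-adjoint: then `(pq)ⁿ ((pq)ⁿ)* = t^(2n-1)` and
`(pq)(pq)* = t`, so the C*-identity together with `‖tᵏ‖ = ‖t‖ᵏ` gives `‖(pq)ⁿ‖ = ‖pq‖^(2n-1)`.
-/

theorem IsIdempotentElem.mul_pow_succ {M : Type*} [Monoid M] {p : M} (hp : IsIdempotentElem p)
    (q : M) (m : ℕ) :
    (p * q) ^ (m + 1) = (p * q * p) ^ m * (p * q) := by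
  induction m with
  | zero => simp
  | succ m ih =>
    rw [pow_succ, ih, pow_succ]
    simp only [mul_assoc]
    rw [← mul_assoc p p q, hp.eq]

theorem IsIdempotentElem.sub_pow_of_mul_eq {R : Type*} [Ring R] {x m : R}
    (hm : IsIdempotentElem m) (hxm : x * m = m) (hmx : m * x = m) {n : ℕ} (hn : n ≠ 0) :
    (x - m) ^ n = x ^ n - m := by
  have pow_mul_m : ∀ k : ℕ, x ^ k * m = m := fun k => by
    induction k with
    | zero => simp
    | succ k ih => rw [pow_succ, mul_assoc, hxm, ih]
  obtain ⟨k, rfl⟩ := Nat.exists_eq_succ_of_ne_zero hn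
  induction k with
  | zero => simp
  | succ k ih =>
    rw [pow_succ, ih (Nat.succ_ne_zero _), sub_mul, mul_sub, mul_sub, pow_mul_m, hmx, hm.eq,
      ← pow_succ]
    abel

theorem IsSelfAdjoint.mul_eq_of_mul_eq {R : Type*} [Mul R] [StarMul R] {p m : R}
    (hp : IsSelfAdjoint p) (hm : IsSelfAdjoint m) (h : m * p = m) : p * m = m := by
  simpa [hp.star_eq, hm.star_eq] using congr(star $h)

section CStarRing

variable {R : Type*} [NormedRing R] [StarRing R] [CStarRing R]

-- The lower bound comes from `‖x‖^(2^k) = ‖x^(2^k)‖ ≤ ‖xⁿ‖ ‖x‖^(2^k - n)` for `2^k ≥ n`.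
theorem IsSelfAdjoint.norm_pow {x : R} (hx : IsSelfAdjoint x) {n : ℕ} (hn : n ≠ 0) :
    ‖x ^ n‖ = ‖x‖ ^ n := by
  refine le_antisymm (norm_pow_le' x (Nat.pos_of_ne_zero hn)) ?_
  rcases (norm_nonneg x).eq_or_lt with hx0 | hx0
  · rw [← hx0, zero_pow hn]
    exact norm_nonneg _
  obtain ⟨k, hk⟩ : ∃ k, n < 2 ^ k := ⟨n, Nat.lt_two_pow_self⟩
  have hsplit : n + (2 ^ k - n) = 2 ^ k := by omega
  have key : ‖x‖ ^ n * ‖x‖ ^ (2 ^ k - n) ≤ ‖x ^ n‖ * ‖x‖ ^ (2 ^ k - n) :=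
    calc ‖x‖ ^ n * ‖x‖ ^ (2 ^ k - n) = ‖x ^ 2 ^ k‖ := by
          rw [← pow_add, hsplit, hx.norm_pow_two_pow]
      _ = ‖x ^ n * x ^ (2 ^ k - n)‖ := by rw [← pow_add, hsplit]
      _ ≤ ‖x ^ n‖ * ‖x‖ ^ (2 ^ k - n) :=
          (norm_mul_le _ _).trans (by gcongr; exact norm_pow_le' x (by omega))
  exact le_of_mul_le_mul_right key (pow_pos hx0 _)

theorem IsStarProjection.norm_mul_pow {p q : R} (hp : IsStarProjection p)
    (hq : IsStarProjection q) {n : ℕ} (hn : n ≠ 0) :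
    ‖(p * q) ^ n‖ = ‖p * q‖ ^ (2 * n - 1) := by
  set t := p * q * p
  have star_mul_pq : star (p * q) = q * p := by
    rw [star_mul, hp.isSelfAdjoint.star_eq, hq.isSelfAdjoint.star_eq]
  have mul_star_pq : p * q * star (p * q) = t := by
    rw [star_mul_pq, mul_assoc, ← mul_assoc q, hq.isIdempotentElem.eq, ← mul_assoc]
  have ht : IsSelfAdjoint t := by
    rw [IsSelfAdjoint, ← mul_star_pq, star_mul, star_star]
  obtain ⟨m, rfl⟩ := Nat.exists_eq_succ_of_ne_zero hn
  have mul_star_pow : (p * q) ^ (m + 1) * star ((p * q) ^ (m + 1)) = t ^ (2 * (m + 1) - 1) := by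
    have hstar : star (t ^ m) = t ^ m := (ht.pow m).star_eq
    rw [hp.isIdempotentElem.mul_pow_succ, star_mul, hstar, mul_assoc, ← mul_assoc (p * q),
      mul_star_pq, ← pow_succ', ← pow_add]
    congr 1
    omega
  have hsq : ‖(p * q) ^ (m + 1)‖ ^ 2 = (‖p * q‖ ^ (2 * (m + 1) - 1)) ^ 2 := by
    rw [sq, ← CStarRing.norm_self_mul_star, mul_star_pow, ht.norm_pow (by omega), ← mul_star_pq,
      CStarRing.norm_self_mul_star, ← sq, ← pow_mul, ← pow_mul, mul_comm]
  exact (pow_left_inj₀ (norm_nonneg _) (by positivity) two_ne_zero).mp hsq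

theorem IsStarProjection.norm_mul_pow_sub {p q m : R} (hp : IsStarProjection p)
    (hq : IsStarProjection q) (hm : IsStarProjection m) (hmp : m * p = m) (hmq : m * q = m)
    {n : ℕ} (hn : n ≠ 0) :
    ‖(p * q) ^ n - m‖ = ‖p * q - m‖ ^ (2 * n - 1) := by
  have hpm := hp.isSelfAdjoint.mul_eq_of_mul_eq hm.isSelfAdjoint hmp
  have hqm := hq.isSelfAdjoint.mul_eq_of_mul_eq hm.isSelfAdjoint hmq
  have hQ : (p - m) * (q - m) = p * q - m := by
    rw [sub_mul, mul_sub, mul_sub, hpm, hmq, hm.isIdempotentElem.eq]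
    abel
  have hpow : (p * q) ^ n - m = ((p - m) * (q - m)) ^ n := by
    rw [hQ, hm.isIdempotentElem.sub_pow_of_mul_eq (by rw [mul_assoc, hqm, hpm])
      (by rw [← mul_assoc, hmp, hmq]) hn]
  rw [hpow, (hm.sub_of_mul_eq_left hp hmp).norm_mul_pow (hm.sub_of_mul_eq_left hq hmq) hn, hQ]

end CStarRing

theorem stmt3 {E : Type*} [NormedAddCommGroup E] [InnerProductSpace ℝ E] [CompleteSpace E]
    (A B : Submodule ℝ E) [CompleteSpace A] [CompleteSpace B] [CompleteSpace ↥(A ⊓ B)]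
    (n : ℕ) (hn : 1 ≤ n) :
    ‖(proj A ∘L proj B) ^ n - proj (A ⊓ B)‖ =
        ‖proj A ∘L proj B - proj (A ⊓ B)‖ ^ (2 * n - 1) ∧
      ∀ x : E, ‖((proj A ∘L proj B) ^ n) x - proj (A ⊓ B) x‖ ≤
        ‖proj A ∘L proj B - proj (A ⊓ B)‖ ^ (2 * n - 1) * ‖x‖ := by
  have hnorm : ‖(proj A ∘L proj B) ^ n - proj (A ⊓ B)‖ =
      ‖proj A ∘L proj B - proj (A ⊓ B)‖ ^ (2 * n - 1) :=
    IsStarProjection.norm_mul_pow_sub (isStarProjection_starProjection (U := A))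
      (isStarProjection_starProjection (U := B)) (isStarProjection_starProjection (U := A ⊓ B))
      (Submodule.starProjection_comp_starProjection_of_le inf_le_left)
      (Submodule.starProjection_comp_starProjection_of_le inf_le_right) (by omega)
  refine ⟨hnorm, fun x => ?_⟩
  rw [← hnorm, ← sub_apply]
  exact ContinuousLinearMap.le_opNorm _ x
end

section
/- Let G, H be closed subspaces of a Hilbert space and F an element of the space. With the iterates Fⁿ = Fⁿ_G + Fⁿ_H of the iterative model combination algorithm (F⁰_H = P_H(F), Fⁿ_G = P_G(F − Fⁿ_H), F^{n+1}_H = P_H(F − Fⁿ_G)), one has lim_{n→∞} ‖P_{G⊕H}(F) − Fⁿ‖ = 0, where G⊕H = closure of {g + h : g ∈ G, h ∈ H} (assumed closed). -/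
/-!
The residual `F - Fⁿ` equals `(P_{G⊥} P_{H⊥})ⁿ⁺¹ F`, so the claim is von Neumann's alternating
projection theorem for `G⊥` and `H⊥`, whose intersection is `(G ⊔ H)⊥`. For that theorem,
`S = P_B P_A P_B` is symmetric with `‖S u‖² ≤ ⟪S u, u⟫`, which makes `k ↦ ⟪Sᵏ x, x⟫` antitone;
hence `‖Sⁿ x - Sᵐ x‖² ≤ ‖Sⁿ x‖² - ‖Sᵐ x‖²` for `n ≤ m`, so `Sⁿ x` is Cauchy, and its limit is the
projection of `x` onto the fixed points of `S`, which are `A ⊓ B`.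
-/

open Filter Topology
open scoped RealInnerProductSpace

section

variable {E : Type*} [NormedAddCommGroup E] [InnerProductSpace ℝ E]

theorem proj_eq_starProjection (K : Submodule ℝ E) [CompleteSpace K] :
    proj K = K.starProjection := rfl

namespace ContinuousLinearMap

variable {S : E →L[ℝ] E}

theorem inner_pow_apply_left (hS : (S : E →ₗ[ℝ] E).IsSymmetric) (n : ℕ) (x y : E) :
    ⟪(S ^ n) x, y⟫ = ⟪x, (S ^ n) y⟫ := by
  simpa only [← toLinearMap_pow, coe_coe] using hS.pow n x y

theorem inner_pow_apply_pow_apply (hS : (S : E →ₗ[ℝ] E).IsSymmetric) (x : E) (i j : ℕ) :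
    ⟪(S ^ i) x, (S ^ j) x⟫ = ⟪(S ^ (i + j)) x, x⟫ := by
  rw [inner_pow_apply_left hS, real_inner_comm, pow_add, mul_apply_eq_comp]

theorem inner_apply_self_le_norm_sq (hS2 : ∀ u, ‖S u‖ ^ 2 ≤ ⟪S u, u⟫) (u : E) :
    ⟪S u, u⟫ ≤ ‖u‖ ^ 2 := by
  have hcs := real_inner_le_norm (S u) u
  nlinarith [hS2 u, norm_nonneg (S u), norm_nonneg u]

theorem antitone_inner_pow_apply_self (hS : (S : E →ₗ[ℝ] E).IsSymmetric)
    (hS2 : ∀ u, ‖S u‖ ^ 2 ≤ ⟪S u, u⟫) (x : E) : Antitone fun k => ⟪(S ^ k) x, x⟫ := by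
  refine antitone_nat_of_succ_le fun k => ?_
  -- with `u = Sʲ x`: `⟪S²ʲ⁺¹ x, x⟫ = ⟪S u, u⟫` lies between `‖S u‖² = ⟪S²ʲ⁺² x, x⟫`
  -- and `‖u‖² = ⟪S²ʲ x, x⟫`
  obtain ⟨j, rfl | rfl⟩ := Nat.even_or_odd' k
  · have h := inner_apply_self_le_norm_sq hS2 ((S ^ j) x)
    rwa [← mul_apply_eq_comp, ← pow_succ', ← real_inner_self_eq_norm_sq,
      inner_pow_apply_pow_apply hS, inner_pow_apply_pow_apply hS, ← two_mul,
      show j + 1 + j = 2 * j + 1 by ring] at h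
  · have h := hS2 ((S ^ j) x)
    rwa [← mul_apply_eq_comp, ← pow_succ', ← real_inner_self_eq_norm_sq,
      inner_pow_apply_pow_apply hS, inner_pow_apply_pow_apply hS,
      show j + 1 + (j + 1) = 2 * j + 1 + 1 by ring, show j + 1 + j = 2 * j + 1 by ring] at h

theorem norm_sq_pow_apply_eq (hS : (S : E →ₗ[ℝ] E).IsSymmetric) (x : E) (n : ℕ) :
    ‖(S ^ n) x‖ ^ 2 = ⟪(S ^ (2 * n)) x, x⟫ := by
  rw [← real_inner_self_eq_norm_sq, inner_pow_apply_pow_apply hS, two_mul]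

theorem norm_sub_pow_apply_sq_le (hS : (S : E →ₗ[ℝ] E).IsSymmetric)
    (hS2 : ∀ u, ‖S u‖ ^ 2 ≤ ⟪S u, u⟫) (x : E) {n m : ℕ} (hnm : n ≤ m) :
    ‖(S ^ n) x - (S ^ m) x‖ ^ 2 ≤ ‖(S ^ n) x‖ ^ 2 - ‖(S ^ m) x‖ ^ 2 := by
  have hmid : ⟪(S ^ (2 * m)) x, x⟫ ≤ ⟪(S ^ (n + m)) x, x⟫ :=
    antitone_inner_pow_apply_self hS hS2 x (by omega)
  rw [norm_sub_sq_real, inner_pow_apply_pow_apply hS, norm_sq_pow_apply_eq hS x m]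
  linarith

theorem cauchySeq_pow_apply (hS : (S : E →ₗ[ℝ] E).IsSymmetric)
    (hS2 : ∀ u, ‖S u‖ ^ 2 ≤ ⟪S u, u⟫) (x : E) : CauchySeq fun n => (S ^ n) x := by
  set a : ℕ → ℝ := fun n => ‖(S ^ n) x‖ ^ 2
  have ha : Antitone a := fun n m hnm => by
    simp only [a, norm_sq_pow_apply_eq hS]
    exact antitone_inner_pow_apply_self hS hS2 x (by omega)
  have hbdd : BddBelow (Set.range a) := ⟨0, by rintro _ ⟨n, rfl⟩; positivity⟩
  have hlim : Tendsto a atTop (𝓝 (⨅ n, a n)) := tendsto_atTop_ciInf ha hbdd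
  refine cauchySeq_of_le_tendsto_0' (fun n => √(a n - ⨅ n, a n)) (fun n m hnm => ?_) ?_
  · rw [dist_eq_norm]
    exact Real.le_sqrt_of_sq_le
      (by linarith [norm_sub_pow_apply_sq_le hS hS2 x hnm, ciInf_le hbdd m])
  · simpa using (hlim.sub_const (⨅ n, a n)).sqrt

theorem tendsto_pow_apply_starProjection [CompleteSpace E]
    (hS : (S : E →ₗ[ℝ] E).IsSymmetric) (hS2 : ∀ u, ‖S u‖ ^ 2 ≤ ⟪S u, u⟫)
    (K : Submodule ℝ E) [K.HasOrthogonalProjection] (hK : ∀ y, S y = y ↔ y ∈ K) (x : E) :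
    Tendsto (fun n => (S ^ n) x) atTop (𝓝 (K.starProjection x)) := by
  obtain ⟨y, hy⟩ := cauchySeq_tendsto_of_complete (cauchySeq_pow_apply hS hS2 x)
  have hSy : S y = y := by
    refine tendsto_nhds_unique ((S.continuous.tendsto y).comp hy) ?_
    simpa only [Function.comp_def, ← mul_apply_eq_comp, ← pow_succ'] using
      (tendsto_add_atTop_iff_nat 1).2 hy
  suffices K.starProjection x = y by rwa [this]
  refine K.eq_starProjection_of_mem_of_inner_eq_zero ((hK y).1 hSy) fun z hz => ?_
  have hinner : ∀ n, ⟪(S ^ n) x, z⟫ = ⟪x, z⟫ := fun n => by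
    rw [inner_pow_apply_left hS, pow_apply_eq_iterate, Function.iterate_fixed ((hK z).2 hz)]
  have hyz : ⟪y, z⟫ = ⟪x, z⟫ :=
    tendsto_nhds_unique (hy.inner tendsto_const_nhds) (by simp only [hinner, tendsto_const_nhds])
  rw [inner_sub_left, hyz, sub_self]

end ContinuousLinearMap

namespace Submodule

variable (A B : Submodule ℝ E) [A.HasOrthogonalProjection] [B.HasOrthogonalProjection]

theorem isSymmetric_starProjection_mul_mul :
    ((B.starProjection * A.starProjection * B.starProjection : E →L[ℝ] E) :
      E →ₗ[ℝ] E).IsSymmetric :=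
  fun u v => by
    simp only [ContinuousLinearMap.coe_coe, mul_apply_eq_comp, inner_starProjection_left_eq_right]

theorem inner_starProjection_mul_mul_apply_self (u : E) :
    ⟪(B.starProjection * A.starProjection * B.starProjection) u, u⟫ =
      ‖A.starProjection (B.starProjection u)‖ ^ 2 := by
  rw [mul_apply_eq_comp, mul_apply_eq_comp, inner_starProjection_left_eq_right]
  simpa using A.re_inner_starProjection_eq_normSq (B.starProjection u)

theorem norm_sq_starProjection_mul_mul_apply_le (u : E) :
    ‖(B.starProjection * A.starProjection * B.starProjection) u‖ ^ 2 ≤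
      ⟪(B.starProjection * A.starProjection * B.starProjection) u, u⟫ := by
  rw [inner_starProjection_mul_mul_apply_self, mul_apply_eq_comp, mul_apply_eq_comp]
  gcongr
  exact B.norm_starProjection_apply_le _

theorem starProjection_mul_mul_apply_eq_self_iff (y : E) :
    (B.starProjection * A.starProjection * B.starProjection) y = y ↔ y ∈ A ⊓ B := by
  constructor
  · intro hy
    have hyB : y ∈ B := hy ▸ B.starProjection_apply_mem _
    have hnorm := inner_starProjection_mul_mul_apply_self A B y
    rw [hy, real_inner_self_eq_norm_sq, starProjection_eq_self_iff.2 hyB,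
      sq_eq_sq₀ (norm_nonneg _) (norm_nonneg _), eq_comm, ← mem_iff_norm_starProjection] at hnorm
    exact ⟨hnorm, hyB⟩
  · rintro ⟨hyA, hyB⟩
    simp only [mul_apply_eq_comp, starProjection_eq_self_iff.2 hyA,
      starProjection_eq_self_iff.2 hyB]

theorem starProjection_mul_pow_succ (n : ℕ) :
    (A.starProjection * B.starProjection) ^ (n + 1) =
      A.starProjection * (B.starProjection * A.starProjection * B.starProjection) ^ n *
        B.starProjection := by
  induction n with
  | zero => simp
  | succ n ih =>
    have hB : B.starProjection * B.starProjection = B.starProjection :=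
      B.isIdempotentElem_starProjection
    rw [pow_succ, ih, pow_succ]
    simp only [mul_assoc, hB]

theorem tendsto_starProjection_mul_pow_apply [CompleteSpace E] [(A ⊓ B).HasOrthogonalProjection]
    (x : E) :
    Tendsto (fun n => ((A.starProjection * B.starProjection) ^ n) x) atTop
      (𝓝 ((A ⊓ B).starProjection x)) := by
  rw [← tendsto_add_atTop_iff_nat 1]
  have h := (A.starProjection.continuous.tendsto _).comp
    (ContinuousLinearMap.tendsto_pow_apply_starProjection (isSymmetric_starProjection_mul_mul A B)
      (norm_sq_starProjection_mul_mul_apply_le A B) (A ⊓ B)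
      (starProjection_mul_mul_apply_eq_self_iff A B) (B.starProjection x))
  have hAB : A.starProjection ((A ⊓ B).starProjection (B.starProjection x)) =
      (A ⊓ B).starProjection x := by
    rw [← ContinuousLinearMap.comp_apply (A ⊓ B).starProjection,
      starProjection_comp_starProjection_of_le inf_le_right,
      starProjection_eq_self_iff.2 (mem_inf.1 (starProjection_apply_mem _ x)).1]
  simpa only [starProjection_mul_pow_succ, mul_apply_eq_comp, hAB, Function.comp_def] using h

end Submodule

theorem sub_add_eq_starProjection_orthogonal_mul_pow_apply (G H : Submodule ℝ E)
    [G.HasOrthogonalProjection] [H.HasOrthogonalProjection] {F : E} {FG FH : ℕ → E}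
    (hFH0 : FH 0 = H.starProjection F)
    (hFG : ∀ n, FG n = G.starProjection (F - FH n))
    (hFH : ∀ n, FH (n + 1) = H.starProjection (F - FG n)) (n : ℕ) :
    F - (FG n + FH n) = ((Gᗮ.starProjection * Hᗮ.starProjection) ^ (n + 1)) F := by
  induction n with
  | zero =>
    simp only [zero_add, pow_one, mul_apply_eq_comp, Submodule.starProjection_orthogonal_val,
      hFG, hFH0, map_sub]
    abel
  | succ n ih =>
    have hFGn : FG n ∈ G := hFG n ▸ G.starProjection_apply_mem _
    have hFHn : FH n ∈ H := by
      cases n with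
      | zero => exact hFH0 ▸ H.starProjection_apply_mem _
      | succ m => exact hFH m ▸ H.starProjection_apply_mem _
    have hFH' : FH (n + 1) = H.starProjection (F - (FG n + FH n)) + FH n := by
      rw [hFH, show F - FG n = F - (FG n + FH n) + FH n by abel, map_add,
        Submodule.starProjection_eq_self_iff.2 hFHn]
    have hFG' : FG (n + 1) =
        G.starProjection (Hᗮ.starProjection (F - (FG n + FH n))) + FG n := by
      rw [hFG, hFH', Submodule.starProjection_orthogonal_val,
        show F - (H.starProjection (F - (FG n + FH n)) + FH n) =
          F - (FG n + FH n) - H.starProjection (F - (FG n + FH n)) + FG n by abel,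
        map_add, Submodule.starProjection_eq_self_iff.2 hFGn]
    rw [pow_succ', mul_apply_eq_comp, ← ih, mul_apply_eq_comp, hFG', hFH',
      Submodule.starProjection_orthogonal_val, Submodule.starProjection_orthogonal_val]
    abel

end

theorem stmt6 {E : Type*} [NormedAddCommGroup E] [InnerProductSpace ℝ E] [CompleteSpace E]
    (G H : Submodule ℝ E) [CompleteSpace G] [CompleteSpace H] [CompleteSpace ↥(G ⊔ H)]
    (F : E) (FG FH : ℕ → E)
    (hFH0 : FH 0 = proj H F)
    (hFG : ∀ n : ℕ, FG n = proj G (F - FH n))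
    (hFH : ∀ n : ℕ, FH (n + 1) = proj H (F - FG n)) :
    Filter.Tendsto (fun n => ‖proj (G ⊔ H) F - (FG n + FH n)‖) Filter.atTop (nhds 0) := by
  simp only [proj_eq_starProjection] at hFH0 hFG hFH ⊢
  have : (Gᗮ ⊓ Hᗮ).HasOrthogonalProjection := by
    rw [Submodule.inf_orthogonal]; infer_instance
  have hlim := (tendsto_add_atTop_iff_nat 1).2
    (Submodule.tendsto_starProjection_mul_pow_apply Gᗮ Hᗮ F)
  have hP : (Gᗮ ⊓ Hᗮ).starProjection F = F - (G ⊔ H).starProjection F := by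
    simp only [Submodule.inf_orthogonal, Submodule.starProjection_orthogonal_val]
  rw [tendsto_iff_norm_sub_tendsto_zero, hP] at hlim
  refine hlim.congr fun n => ?_
  rw [← sub_add_eq_starProjection_orthogonal_mul_pow_apply G H hFH0 hFG hFH n,
    sub_sub_sub_cancel_left]
end

section
/- Let F and Fⁿ be bounded linear operators with ‖F − Fⁿ‖ ≤ δ and ‖Fⁿ‖ ≤ 1 + δ. Let x_{k+1} = F(x_k), xⁿ_{k+1} = Fⁿ(xⁿ_k) with xⁿ₀ = x₀ and ‖x_k‖ ≤ M for all k. Then eⁿ_k = ‖xⁿ_k − x_k‖ ≤ ((1+δ)^k − 1) M. Moreover, if kδ ≤ 1, then eⁿ_k ≤ k² M δ. -/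
lemma aux_pow_bound (δ : ℝ) (hδ0 : 0 ≤ δ) :
    ∀ k : ℕ, (k : ℝ) * δ ≤ 1 → (1 + δ) ^ k ≤ 1 + (k : ℝ) ^ 2 * δ := by
  intro k
  induction k with
  | zero => simp
  | succ n ih =>
    intro h
    have hn : (n : ℝ) * δ ≤ 1 := by
      have : (n : ℝ) ≤ (n : ℝ) + 1 := by linarith
      push_cast at h ⊢
      nlinarith
    have h1 := ih hn
    have hpos : (0:ℝ) ≤ (1 + δ) ^ n := by positivity
    push_cast
    calc (1 + δ) ^ (n + 1) = (1 + δ) ^ n * (1 + δ) := by ring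
    _ ≤ (1 + (n : ℝ) ^ 2 * δ) * (1 + δ) := by nlinarith
    _ ≤ 1 + ((n : ℝ) + 1) ^ 2 * δ := by
      have hn0 : (0:ℝ) ≤ (n : ℝ) * δ := by positivity
      nlinarith [hn, hn0]

theorem stmt10 {E : Type*} [NormedAddCommGroup E] [NormedSpace ℝ E]
    (F Fn : E →L[ℝ] E) (δ M : ℝ)
    (hδ : ‖F - Fn‖ ≤ δ) (hFn : ‖Fn‖ ≤ 1 + δ)
    (x xn : ℕ → E) (h0 : xn 0 = x 0)
    (hx : ∀ k : ℕ, x (k + 1) = F (x k)) (hxn : ∀ k : ℕ, xn (k + 1) = Fn (xn k))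
    (hM : ∀ k : ℕ, ‖x k‖ ≤ M) :
    ∀ k : ℕ, ‖xn k - x k‖ ≤ ((1 + δ) ^ k - 1) * M ∧
      ((k : ℝ) * δ ≤ 1 → ‖xn k - x k‖ ≤ (k : ℝ) ^ 2 * M * δ) := by
  have hδ0 : 0 ≤ δ := le_trans (norm_nonneg _) hδ
  have hM0 : 0 ≤ M := le_trans (norm_nonneg _) (hM 0)
  have main : ∀ k : ℕ, ‖xn k - x k‖ ≤ ((1 + δ) ^ k - 1) * M := by
    intro k
    induction k with
    | zero => simp [h0]
    | succ n ih =>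
      have key : xn (n+1) - x (n+1) = Fn (xn n - x n) - (F - Fn) (x n) := by
        rw [hx n, hxn n]
        simp [map_sub]
        try abel
      have h1 : ‖Fn (xn n - x n)‖ ≤ (1 + δ) * ‖xn n - x n‖ := by
        calc ‖Fn (xn n - x n)‖ ≤ ‖Fn‖ * ‖xn n - x n‖ := Fn.le_opNorm _
        _ ≤ (1 + δ) * ‖xn n - x n‖ :=
          mul_le_mul_of_nonneg_right hFn (norm_nonneg _)
      have h2 : ‖(F - Fn) (x n)‖ ≤ δ * M := by
        calc ‖(F - Fn) (x n)‖ ≤ ‖F - Fn‖ * ‖x n‖ := (F - Fn).le_opNorm _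
        _ ≤ δ * M := mul_le_mul hδ (hM n) (norm_nonneg _) hδ0
      have hen : 0 ≤ ‖xn n - x n‖ := norm_nonneg _
      calc ‖xn (n+1) - x (n+1)‖ ≤ ‖Fn (xn n - x n)‖ + ‖(F - Fn) (x n)‖ := by
            rw [key]; exact norm_sub_le _ _
      _ ≤ (1 + δ) * ‖xn n - x n‖ + δ * M := add_le_add h1 h2
      _ ≤ (1 + δ) * (((1 + δ) ^ n - 1) * M) + δ * M := by nlinarith
      _ = ((1 + δ) ^ (n+1) - 1) * M := by ring
  intro k
  refine ⟨main k, fun hk => ?_⟩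
  have := aux_pow_bound δ hδ0 k hk
  calc ‖xn k - x k‖ ≤ ((1 + δ) ^ k - 1) * M := main k
  _ ≤ (k : ℝ) ^ 2 * M * δ := by nlinarith
end

section
/- Let A, B be closed subspaces of a Hilbert space with c = c(A,B) < 1 (the cosine of the Friedrichs angle of A^⊥, B^⊥). Define the residuals rⁿ = Fⁿ − F̃ of the alternating projection iteration, satisfying r^{n+1} = Q(rⁿ) where Q is an operator with ‖Qⁱ‖ ≤ c^{2i−1} for all i ≥ 1. Then ‖r^{n+1}‖ ≤ (c/(1−c²)) ‖rⁿ − r^{n+1}‖, i.e., the a posteriori bound ‖Fⁿ⁺¹ − F̃‖ ≤ (c/(1−c²)) ‖Fⁿ − Fⁿ⁺¹‖ holds. -/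
theorem stmt11 {E : Type*} [NormedAddCommGroup E] [NormedSpace ℝ E] [CompleteSpace E]
    (Q : E →L[ℝ] E) (c : ℝ) (hc0 : 0 ≤ c) (hc1 : c < 1)
    (hQ : ∀ i : ℕ, 1 ≤ i → ‖Q ^ i‖ ≤ c ^ (2 * i - 1))
    (r : ℕ → E) (hr : ∀ n : ℕ, r (n + 1) = Q (r n)) :
    ∀ n : ℕ, ‖r (n + 1)‖ ≤ c / (1 - c ^ 2) * ‖r n - r (n + 1)‖ := by
  intro n
  set d : E := r n - r (n + 1) with hd
  set x : E := r (n + 1) with hx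
  have hc2 : (0:ℝ) < 1 - c ^ 2 := by nlinarith
  -- telescoping identity
  have key : ∀ N : ℕ, (∑ i ∈ Finset.range N, (Q ^ (i + 1)) d) = x - (Q ^ N) x := by
    intro N
    induction N with
    | zero => simp
    | succ N ih =>
      rw [Finset.sum_range_succ, ih]
      have h1 : (Q ^ (N + 1)) d = (Q ^ N) x - (Q ^ (N + 1)) x := by
        have : (Q ^ (N + 1)) (r n) = (Q ^ N) x := by
          rw [pow_succ, ContinuousLinearMap.mul_apply, ← hr n]
        simp only [hd, map_sub, this]
      rw [h1]
      abel
  -- finite bound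
  have bound : ∀ N : ℕ, 1 ≤ N → ‖x‖ ≤ c / (1 - c ^ 2) * ‖d‖ + c ^ N * ‖x‖ := by
    intro N hN
    have hxeq : x = (∑ i ∈ Finset.range N, (Q ^ (i + 1)) d) + (Q ^ N) x := by
      rw [key N]; abel
    calc ‖x‖ ≤ ‖∑ i ∈ Finset.range N, (Q ^ (i + 1)) d‖ + ‖(Q ^ N) x‖ := by
          conv_lhs => rw [hxeq]
          exact norm_add_le _ _
      _ ≤ (∑ i ∈ Finset.range N, c ^ (2 * i + 1) * ‖d‖) + c ^ N * ‖x‖ := by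
          apply add_le_add
          · calc ‖∑ i ∈ Finset.range N, (Q ^ (i + 1)) d‖
                ≤ ∑ i ∈ Finset.range N, ‖(Q ^ (i + 1)) d‖ := norm_sum_le _ _
              _ ≤ ∑ i ∈ Finset.range N, c ^ (2 * i + 1) * ‖d‖ := by
                  apply Finset.sum_le_sum
                  intro i _
                  calc ‖(Q ^ (i + 1)) d‖ ≤ ‖Q ^ (i + 1)‖ * ‖d‖ := (Q ^ (i + 1)).le_opNorm d
                    _ ≤ c ^ (2 * i + 1) * ‖d‖ := by
                        have := hQ (i + 1) (by omega)
                        have he : 2 * (i + 1) - 1 = 2 * i + 1 := by omega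
                        rw [he] at this
                        exact mul_le_mul_of_nonneg_right this (norm_nonneg d)
          · calc ‖(Q ^ N) x‖ ≤ ‖Q ^ N‖ * ‖x‖ := (Q ^ N).le_opNorm x
              _ ≤ c ^ (2 * N - 1) * ‖x‖ :=
                  mul_le_mul_of_nonneg_right (hQ N hN) (norm_nonneg x)
              _ ≤ c ^ N * ‖x‖ :=
                  mul_le_mul_of_nonneg_right
                    (pow_le_pow_of_le_one hc0 hc1.le (by omega)) (norm_nonneg x)
      _ ≤ c / (1 - c ^ 2) * ‖d‖ + c ^ N * ‖x‖ := by
          gcongr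
          have : ∑ i ∈ Finset.range N, c ^ (2 * i + 1) * ‖d‖
              = (∑ i ∈ Finset.range N, (c ^ 2) ^ i) * (c * ‖d‖) := by
            rw [Finset.sum_mul]
            apply Finset.sum_congr rfl
            intro i _
            rw [← pow_mul]
            ring
          rw [this]
          have hgeo : (∑ i ∈ Finset.range N, (c ^ 2) ^ i) * (1 - c ^ 2) ≤ 1 := by
            have h := geom_sum_mul (c ^ 2) N
            nlinarith [pow_nonneg (sq_nonneg c) N]
          rw [div_mul_eq_mul_div, le_div_iff₀ hc2]
          nlinarith [mul_le_mul_of_nonneg_left hgeo (mul_nonneg hc0 (norm_nonneg d)),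
            mul_nonneg hc0 (norm_nonneg d)]
  -- limit
  have htend : Filter.Tendsto (fun N : ℕ => c / (1 - c ^ 2) * ‖d‖ + c ^ N * ‖x‖)
      Filter.atTop (nhds (c / (1 - c ^ 2) * ‖d‖)) := by
    have : Filter.Tendsto (fun N : ℕ => c ^ N * ‖x‖) Filter.atTop (nhds (0 * ‖x‖)) :=
      (tendsto_pow_atTop_nhds_zero_of_lt_one hc0 hc1).mul_const _
    simpa using Filter.Tendsto.const_add _ this
  exact ge_of_tendsto htend (Filter.eventually_atTop.2 ⟨1, bound⟩)
end
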